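/- Let R be a commutative ring, G a finite group acting on R by ring automorphisms, P = R^G, H ≤ G a subgroup, Q = R^H. Let p be a prime ideal of P and r a prime ideal of R lying over p, with decomposition group D(r) = {g ∈ G : g(r) = r}. Then there is exactly one prime ideal of Q lying over p if and only if G = H · D(r), i.e., every element of G can be written as a product h·d with h ∈ H and d ∈ D(r). -/

import Mathlib

open Pointwise

/-- The subring of elements of `R` fixed by every element of a subgroup `H` of `G`. -/
def fixedSubring (G : Type*) [Group G] (R : Type*) [CommRing R]
    [MulSemiringAction G R] (H : Subgroup G) : Subring R where
  carrier := {x : R | ∀ g ∈ H, g • x = x}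
  zero_mem' := fun g _ => smul_zero g
  one_mem' := fun g _ => smul_one g
  add_mem' := fun {a b} ha hb g hg => by rw [smul_add, ha g hg, hb g hg]
  neg_mem' := fun {a} ha g hg => by rw [smul_neg, ha g hg]
  mul_mem' := fun {a b} ha hb g hg => by rw [smul_mul', ha g hg, hb g hg]

theorem fixedSubring_le {G : Type*} [Group G] {R : Type*} [CommRing R]
    [MulSemiringAction G R] (H : Subgroup G) :
    fixedSubring G R ⊤ ≤ fixedSubring G R H :=
  fun _ hx g _ => hx g trivial

/-! Over `R^G`, the primes of `R` lying over `p` form a single `G`-orbit, and likewise over `R^H`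
for `H`. Hence the primes of `R^H` over `p` are the contractions of the translates `g • r`, and
`g • r` contracts to the same prime of `R^H` as `r` exactly when `g • r = h • r` for some `h ∈ H`,
that is, when `g ∈ H · D(r)`. -/

theorem existsUnique_exists_apply_eq_iff {α β : Type*} {f : α → β} (a : α) :
    (∃! b, ∃ x, f x = b) ↔ ∀ x, f x = f a := by
  constructor
  · rintro ⟨b, -, huniq⟩ x
    exact (huniq _ ⟨x, rfl⟩).trans (huniq _ ⟨a, rfl⟩).symm
  · intro h
    exact ⟨f a, ⟨a, rfl⟩, by rintro _ ⟨x, rfl⟩; exact h x⟩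

namespace fixedSubring

variable {G : Type*} [Group G] {R : Type*} [CommRing R] [MulSemiringAction G R]

instance (H : Subgroup G) : SMulCommClass H (fixedSubring G R H) R where
  smul_comm h a x := by
    change (h : G) • ((a : R) * x) = (a : R) * ((h : G) • x)
    rw [smul_mul', a.2 h h.2]

instance (H : Subgroup G) : Algebra.IsInvariant (fixedSubring G R H) R H where
  isInvariant x hx := ⟨⟨x, fun g hg => hx ⟨g, hg⟩⟩, rfl⟩

theorem comap_smul_of_mem {H : Subgroup G} {g : G} (hg : g ∈ H) (r : Ideal R) :
    (g • r).comap (fixedSubring G R H).subtype = r.comap (fixedSubring G R H).subtype :=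
  Ideal.under_smul (fixedSubring G R H) r (⟨g, hg⟩ : H)

theorem comap_inclusion_comap (H : Subgroup G) (s : Ideal R) :
    (s.comap (fixedSubring G R H).subtype).comap (Subring.inclusion (fixedSubring_le H)) =
      s.comap (fixedSubring G R ⊤).subtype :=
  Ideal.comap_comap _ _

variable [Finite G]

theorem exists_smul_eq_of_comap_eq (H : Subgroup G) {r s : Ideal R} [r.IsPrime] [s.IsPrime]
    (h : r.comap (fixedSubring G R H).subtype = s.comap (fixedSubring G R H).subtype) :
    ∃ g ∈ H, g • r = s := by
  obtain ⟨g, hg⟩ := Algebra.IsInvariant.exists_smul_of_under_eq (fixedSubring G R H) R H r s h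
  exact ⟨g, g.2, hg.symm⟩

theorem exists_isPrime_comap_eq (H : Subgroup G) (q : Ideal (fixedSubring G R H)) [q.IsPrime] :
    ∃ s : Ideal R, s.IsPrime ∧ s.comap (fixedSubring G R H).subtype = q := by
  have := Algebra.IsInvariant.isIntegral (fixedSubring G R H) R H
  obtain ⟨⟨s, hs, hlies⟩⟩ := Ideal.nonempty_primesOver (S := R) q
  exact ⟨s, hs, hlies.over.symm⟩

theorem isPrime_and_comap_inclusion_eq_iff (H : Subgroup G) (r : Ideal R) [r.IsPrime]
    (q : Ideal (fixedSubring G R H)) :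
    (q.IsPrime ∧ q.comap (Subring.inclusion (fixedSubring_le H)) =
        r.comap (fixedSubring G R ⊤).subtype) ↔
      ∃ g : G, (g • r).comap (fixedSubring G R H).subtype = q := by
  constructor
  · rintro ⟨hq, hqr⟩
    obtain ⟨s, hs, rfl⟩ := exists_isPrime_comap_eq H q
    rw [comap_inclusion_comap] at hqr
    obtain ⟨g, -, rfl⟩ := exists_smul_eq_of_comap_eq ⊤ hqr.symm
    exact ⟨g, rfl⟩
  · rintro ⟨g, rfl⟩
    exact ⟨Ideal.comap_isPrime _ _, by
      rw [comap_inclusion_comap, comap_smul_of_mem (Subgroup.mem_top g)]⟩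

theorem comap_smul_eq_comap_iff (H : Subgroup G) {r : Ideal R} [r.IsPrime] (g : G) :
    (g • r).comap (fixedSubring G R H).subtype = r.comap (fixedSubring G R H).subtype ↔
      ∃ h ∈ H, ∃ d ∈ MulAction.stabilizer G r, g = h * d := by
  constructor
  · intro hg
    obtain ⟨h, hh, hhr⟩ := exists_smul_eq_of_comap_eq H hg.symm
    refine ⟨h, hh, h⁻¹ * g, ?_, by group⟩
    rw [MulAction.mem_stabilizer_iff, mul_smul, ← hhr, inv_smul_smul]
  · rintro ⟨h, hh, d, hd, rfl⟩
    rw [mul_smul, hd, comap_smul_of_mem hh]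

end fixedSubring

theorem unique_prime_over_iff_decomposition_general {G : Type*} [Group G] [Finite G]
    {R : Type*} [CommRing R] [MulSemiringAction G R] (H : Subgroup G)
    (p : Ideal (fixedSubring G R ⊤))
    (r : Ideal R) (hr : r.IsPrime)
    (hlie : r.comap (fixedSubring G R ⊤).subtype = p) :
    (∃! q : Ideal (fixedSubring G R H), q.IsPrime ∧
        q.comap (Subring.inclusion (fixedSubring_le H)) = p) ↔
    (∀ g : G, ∃ h ∈ H, ∃ d ∈ MulAction.stabilizer G r, g = h * d) := by
  subst hlie
  simp_rw [fixedSubring.isPrime_and_comap_inclusion_eq_iff H r,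
    existsUnique_exists_apply_eq_iff (1 : G), one_smul, fixedSubring.comap_smul_eq_comap_iff H]

/-- With `G` finite acting on `R`, `P = R^G`, `Q = R^H`, `p` a prime of `P` and `r` a
prime of `R` lying over `p` with decomposition group `D(r)`: there is exactly one
prime of `Q` lying over `p` if and only if `G = H · D(r)`. -/
theorem unique_prime_over_iff_decomposition {G : Type*} [Group G] [Finite G]
    {R : Type*} [CommRing R] [MulSemiringAction G R] (H : Subgroup G)
    (p : Ideal (fixedSubring G R ⊤)) (hp : p.IsPrime)
    (r : Ideal R) (hr : r.IsPrime)
    (hlie : r.comap (fixedSubring G R ⊤).subtype = p) :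
    (∃! q : Ideal (fixedSubring G R H), q.IsPrime ∧
        q.comap (Subring.inclusion (fixedSubring_le H)) = p) ↔
    (∀ g : G, ∃ h ∈ H, ∃ d ∈ MulAction.stabilizer G r, g = h * d) :=
  unique_prime_over_iff_decomposition_general H p r hr hlie
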